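/- Holographic limit of the two-point function: fix d > 0 and distinct x₁, x₂ ∈ (0,1), and define φ_λ(x₁,x₂) := [(D₂(λ))'(x₁)(D₂(λ))'(x₂)]^d · |D₂(λ)x₁ - D₂(λ)x₂|^{-2d}. Then lim_{λ→∞} φ_λ(x₁,x₂) = [ξ'(x₁)ξ'(x₂)]^d · |ξ(x₁) - ξ(x₂)|^{-2d}. -/

import Mathlib

/-!
Writing `aᵢ = ξ(xᵢ)`, `bᵢ = ξ'(xᵢ)` and `u = λa`, the chain rule gives
`(D₂(λ))'(xᵢ) = (ξ⁻¹)'(λaᵢ) · λbᵢ`, and `ξ⁻¹(u) = (√(u²+1) - 1)/u` satisfies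
`ξ⁻¹(u) = 1 - 1/u + o(1/u)` and `(ξ⁻¹)'(u) ~ 1/u²` as `u → ∞`.
Hence `λ²(ξ⁻¹)'(λaᵢ) → 1/aᵢ²` and `λ(D₂(λ)x₁ - D₂(λ)x₂) → 1/a₂ - 1/a₁`, so the powers of `λ`
cancel in the quotient `(D₂(λ))'(x₁)(D₂(λ))'(x₂) / (D₂(λ)x₁ - D₂(λ)x₂)²`, which tends to
`b₁b₂/(a₁ - a₂)²`; raising to the power `d` is continuous at this positive limit.
-/

/-- The stretching map ξ(x) = 2x/(1-x²). -/
noncomputable def xi (x : ℝ) : ℝ := 2 * x / (1 - x ^ 2)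

/-- The inverse map ξ⁻¹(y) = (√(y²+1)-1)/y. -/
noncomputable def xiInv (y : ℝ) : ℝ := (Real.sqrt (y ^ 2 + 1) - 1) / y

/-- The lifted dilation D₂(λ) = ξ⁻¹ ∘ D(λ) ∘ ξ on (0,1). -/
noncomputable def D2 (l x : ℝ) : ℝ := xiInv (l * xi x)

noncomputable def xi' (x : ℝ) : ℝ := 2 * (1 + x ^ 2) / (1 - x ^ 2) ^ 2

open Filter Topology Real

noncomputable def xiInv' (u : ℝ) : ℝ := (1 - (√(u ^ 2 + 1))⁻¹) / u ^ 2

lemma xi_pos {x : ℝ} (hx : x ∈ Set.Ioo (0 : ℝ) 1) : 0 < xi x :=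
  div_pos (by linarith [hx.1]) (by nlinarith [hx.1, hx.2])

lemma xi'_pos {x : ℝ} (hx : x ^ 2 ≠ 1) : 0 < xi' x := by
  have : 1 - x ^ 2 ≠ 0 := sub_ne_zero.2 hx.symm
  unfold xi'
  positivity

lemma xi_injOn : Set.InjOn xi (Set.Ioo (-1) 1) := by
  intro x hx y hy hxy
  have hx' : 1 - x ^ 2 ≠ 0 := by nlinarith [hx.1, hx.2]
  have hy' : 1 - y ^ 2 ≠ 0 := by nlinarith [hy.1, hy.2]
  unfold xi at hxy
  field_simp at hxy
  have hfac : (x - y) * (1 + x * y) = 0 := by linear_combination hxy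
  have hpos : 0 < 1 + x * y := by nlinarith [hx.1, hx.2, hy.1, hy.2]
  exact sub_eq_zero.1 ((mul_eq_zero.1 hfac).resolve_right hpos.ne')

lemma hasDerivAt_xi {x : ℝ} (hx : x ^ 2 ≠ 1) : HasDerivAt xi (xi' x) x := by
  have hden : 1 - x ^ 2 ≠ 0 := sub_ne_zero.2 hx.symm
  refine (((hasDerivAt_id' x).const_mul 2).div ((hasDerivAt_pow 2 x).const_sub 1) hden
    |>.congr_deriv ?_)
  unfold xi'
  field_simp
  ring

lemma hasDerivAt_xiInv {u : ℝ} (hu : u ≠ 0) : HasDerivAt xiInv (xiInv' u) u := by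
  have hs : 0 < √(u ^ 2 + 1) := sqrt_pos.2 (by positivity)
  have hs2 : √(u ^ 2 + 1) ^ 2 = u ^ 2 + 1 := sq_sqrt (by positivity)
  refine ((((hasDerivAt_pow 2 u).add_const 1).sqrt (by positivity)).sub_const 1).div
    (hasDerivAt_id' u) hu |>.congr_deriv ?_
  unfold xiInv'
  field_simp
  linear_combination -2 * hs2

lemma hasDerivAt_D2 {l x : ℝ} (hx : x ^ 2 ≠ 1) (hu : l * xi x ≠ 0) :
    HasDerivAt (D2 l) (xiInv' (l * xi x) * (l * xi' x)) x :=
  (hasDerivAt_xiInv hu).comp x ((hasDerivAt_xi hx).const_mul l)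

lemma xiInv'_nonneg (u : ℝ) : 0 ≤ xiInv' u := by
  have : 1 ≤ √(u ^ 2 + 1) := one_le_sqrt.2 (by nlinarith [sq_nonneg u])
  unfold xiInv'
  have : (√(u ^ 2 + 1))⁻¹ ≤ 1 := inv_le_one_of_one_le₀ this
  have : 0 ≤ 1 - (√(u ^ 2 + 1))⁻¹ := by linarith
  positivity

lemma tendsto_sqrt_sq_add_one_atTop : Tendsto (fun u : ℝ => √(u ^ 2 + 1)) atTop atTop :=
  tendsto_atTop_mono (fun _ => le_sqrt_of_sq_le (le_add_of_nonneg_right zero_le_one)) tendsto_id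

lemma tendsto_sqrt_sq_add_one_sub_self :
    Tendsto (fun u : ℝ => √(u ^ 2 + 1) - u) atTop (𝓝 0) := by
  have hsum : Tendsto (fun u : ℝ => √(u ^ 2 + 1) + u) atTop atTop :=
    tendsto_sqrt_sq_add_one_atTop.atTop_add_atTop tendsto_id
  refine (tendsto_inv_atTop_zero.comp hsum).congr' ?_
  filter_upwards [eventually_ge_atTop 0] with u hu
  have hs2 : √(u ^ 2 + 1) ^ 2 = u ^ 2 + 1 := sq_sqrt (by positivity)
  have : 0 < √(u ^ 2 + 1) + u := by positivity
  simp only [Function.comp_apply]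
  field_simp
  linear_combination -hs2

lemma tendsto_sq_mul_xiInv' {a : ℝ} (ha : 0 < a) :
    Tendsto (fun l => l ^ 2 * xiInv' (l * a)) atTop (𝓝 (a ^ 2)⁻¹) := by
  have hs := tendsto_sqrt_sq_add_one_atTop.comp (tendsto_id.atTop_mul_const ha)
  have := ((tendsto_inv_atTop_zero.comp hs).const_sub 1).div_const (a ^ 2)
  rw [sub_zero, one_div] at this
  refine this.congr' ?_
  filter_upwards [eventually_ne_atTop 0] with l hl
  simp only [Function.comp_apply, id, xiInv']
  field_simp

lemma tendsto_mul_one_sub_xiInv {a : ℝ} (ha : 0 < a) :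
    Tendsto (fun l => l * (1 - xiInv (l * a))) atTop (𝓝 a⁻¹) := by
  have hs := tendsto_sqrt_sq_add_one_sub_self.comp (tendsto_id.atTop_mul_const ha)
  have := (hs.const_sub 1).div_const a
  rw [sub_zero, one_div] at this
  refine this.congr' ?_
  filter_upwards [eventually_ne_atTop 0] with l hl
  simp only [Function.comp_apply, id, xiInv]
  field_simp
  ring

lemma rpow_mul_rpow_neg {A B : ℝ} (hA : 0 ≤ A) (hB : 0 ≤ B) (d : ℝ) :
    A ^ d * B ^ (-d) = (A / B) ^ d := by
  rw [rpow_neg hB, div_rpow hA hB, div_eq_mul_inv]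

lemma tendsto_xiInv_two_point_ratio {a₁ a₂ : ℝ} (b₁ b₂ : ℝ) (ha₁ : 0 < a₁) (ha₂ : 0 < a₂)
    (hne : a₁ ≠ a₂) :
    Tendsto (fun l => xiInv' (l * a₁) * (l * b₁) * (xiInv' (l * a₂) * (l * b₂)) /
        (xiInv (l * a₁) - xiInv (l * a₂)) ^ 2)
      atTop (𝓝 (b₁ * b₂ / (a₁ - a₂) ^ 2)) := by
  have hlim : (a₁ ^ 2)⁻¹ * b₁ * ((a₂ ^ 2)⁻¹ * b₂) / (a₂⁻¹ - a₁⁻¹) ^ 2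
      = b₁ * b₂ / (a₁ - a₂) ^ 2 := by
    have : a₁ - a₂ ≠ 0 := sub_ne_zero.2 hne
    field_simp
  have hsep : a₂⁻¹ - a₁⁻¹ ≠ 0 := sub_ne_zero.2 (inv_injective.ne hne.symm)
  have hrescaled := (((tendsto_sq_mul_xiInv' ha₁).mul_const b₁).mul
    ((tendsto_sq_mul_xiInv' ha₂).mul_const b₂)).div
    (((tendsto_mul_one_sub_xiInv ha₂).sub (tendsto_mul_one_sub_xiInv ha₁)).pow 2)
    (by positivity)
  rw [hlim] at hrescaled
  refine hrescaled.congr' ?_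
  filter_upwards [eventually_ne_atTop 0] with l hl
  simp only [Pi.div_apply]
  field_simp
  ring

theorem holographic_limit_two_point_general (d x₁ x₂ : ℝ)
    (hx₁ : x₁ ∈ Set.Ioo (0 : ℝ) 1) (hx₂ : x₂ ∈ Set.Ioo (0 : ℝ) 1)
    (hne : x₁ ≠ x₂) :
    Filter.Tendsto
      (fun l => (deriv (D2 l) x₁ * deriv (D2 l) x₂) ^ d *
        (((D2 l x₁ - D2 l x₂) ^ 2) ^ (-d) : ℝ))
      Filter.atTop
      (nhds ((xi' x₁ * xi' x₂) ^ d * (((xi x₁ - xi x₂) ^ 2) ^ (-d) : ℝ))) := by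
  have hsq₁ : x₁ ^ 2 ≠ 1 := by nlinarith [hx₁.1, hx₁.2]
  have hsq₂ : x₂ ^ 2 ≠ 1 := by nlinarith [hx₂.1, hx₂.2]
  have ha₁ := xi_pos hx₁
  have ha₂ := xi_pos hx₂
  have hb₁ := xi'_pos hsq₁
  have hb₂ := xi'_pos hsq₂
  have hsep : xi x₁ ≠ xi x₂ := fun h =>
    hne (xi_injOn ⟨by linarith [hx₁.1], hx₁.2⟩ ⟨by linarith [hx₂.1], hx₂.2⟩ h)
  have hsub : xi x₁ - xi x₂ ≠ 0 := sub_ne_zero.2 hsep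
  rw [rpow_mul_rpow_neg (by positivity) (sq_nonneg _)]
  refine ((tendsto_xiInv_two_point_ratio _ _ ha₁ ha₂ hsep).rpow_const
    (Or.inl (by positivity))).congr' ?_
  filter_upwards [eventually_gt_atTop 0] with l hl
  rw [(hasDerivAt_D2 hsq₁ (by positivity)).deriv, (hasDerivAt_D2 hsq₂ (by positivity)).deriv,
    rpow_mul_rpow_neg (by positivity [xiInv'_nonneg (l * xi x₁), xiInv'_nonneg (l * xi x₂)])
      (sq_nonneg _)]
  rfl

/-- Holographic limit of the two-point function:
    φ_λ(x₁,x₂) = [(D₂(λ))'(x₁)(D₂(λ))'(x₂)]^d |D₂(λ)x₁ - D₂(λ)x₂|^{-2d}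
    converges to [ξ'(x₁)ξ'(x₂)]^d |ξ(x₁) - ξ(x₂)|^{-2d} as λ → ∞. -/
theorem holographic_limit_two_point (d x₁ x₂ : ℝ) (hd : 0 < d)
    (hx₁ : x₁ ∈ Set.Ioo (0 : ℝ) 1) (hx₂ : x₂ ∈ Set.Ioo (0 : ℝ) 1)
    (hne : x₁ ≠ x₂) :
    Filter.Tendsto
      (fun l => (deriv (D2 l) x₁ * deriv (D2 l) x₂) ^ d *
        (((D2 l x₁ - D2 l x₂) ^ 2) ^ (-d) : ℝ))
      Filter.atTop
      (nhds ((xi' x₁ * xi' x₂) ^ d * (((xi x₁ - xi x₂) ^ 2) ^ (-d) : ℝ))) :=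
  holographic_limit_two_point_general d x₁ x₂ hx₁ hx₂ hne
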